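/- For density matrices ρ, σ and a positive semidefinite operator A ≤ Id with tr(σA²) > 0, the root fidelity satisfies √F(ρ, σ|A) ≤ √tr(ρA)·√tr(σA) / √tr(σA²). In particular, if A is an orthogonal projector, √F(ρ, σ|A) ≤ √tr(ρA). -/

import Mathlib

open Matrix ComplexOrder

/-- The square root of a positive semidefinite matrix (as in the older Mathlib). -/
noncomputable def Matrix.PosSemidef.sqrt {n : Type*} [Fintype n] {𝕜 : Type*} [RCLike 𝕜]
    [DecidableEq n] {A : Matrix n n 𝕜} (hA : A.PosSemidef) : Matrix n n 𝕜 :=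
  hA.isHermitian.eigenvectorUnitary.1 * diagonal ((↑) ∘ Real.sqrt ∘ hA.isHermitian.eigenvalues) *
    (star hA.isHermitian.eigenvectorUnitary : Matrix n n 𝕜)

/-- The Schatten 1-norm (trace norm): ‖M‖₁ = tr √(MᴴM). -/
noncomputable def traceNorm {n m : Type*} [Fintype n] [Fintype m] [DecidableEq m]
    (M : Matrix n m ℂ) : ℝ :=
  ((Matrix.posSemidef_conjTranspose_mul_self M).sqrt.trace).re

/-!
Write `A⁺ = cfc (·⁻¹) A` for the pseudo-inverse of `A` (since `0⁻¹ = 0` in `ℝ`, it inverts `A` on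
its range and vanishes on its kernel; likewise for `√A⁺`). Because `A A⁺ A = A`, the state
`τ = AσA / tr(σA²)` satisfies `A A⁺ τ = τ`, so `√ρ √τ = (√ρ √A)(√A⁺ √τ)`. Hölder's inequality
`‖XY‖₁ ≤ ‖X‖₂ ‖Y‖₂` (polar decomposition of `XY` followed by Cauchy–Schwarz for the
Hilbert–Schmidt inner product) then bounds `√F(ρ, τ)` by `√tr(ρA) · √tr(A⁺τ)`, and
`tr(A⁺τ) = tr(A A⁺ A σ) / tr(σA²) = tr(σA) / tr(σA²)`. For a projector `tr(σA²) = tr(σA)`.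
-/

open scoped MatrixOrder

namespace Matrix

variable {l m n 𝕜 : Type*} [Fintype l] [Fintype m] [Fintype n] [RCLike 𝕜]

lemma re_trace_conjTranspose_mul_le (P Q : Matrix m n 𝕜) :
    RCLike.re (Pᴴ * Q).trace ≤
      √(RCLike.re (Pᴴ * P).trace) * √(RCLike.re (Qᴴ * Q).trace) := by
  let vec : Matrix m n 𝕜 → EuclideanSpace 𝕜 (m × n) := fun R => WithLp.toLp 2 fun p => R p.1 p.2
  have hinner (R S : Matrix m n 𝕜) : (Rᴴ * S).trace = inner 𝕜 (vec R) (vec S) := by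
    simp [vec, trace, mul_apply, EuclideanSpace.inner_eq_star_dotProduct, dotProduct,
      Fintype.sum_prod_type, Finset.sum_comm (γ := m), mul_comm]
  have hnorm (R : Matrix m n 𝕜) : √(RCLike.re (Rᴴ * R).trace) = ‖vec R‖ := by
    rw [hinner, inner_self_eq_norm_sq, Real.sqrt_sq (norm_nonneg _)]
  rw [hnorm, hnorm, hinner]
  exact re_inner_le_norm _ _

lemma trace_conjTranspose_mul_mul_self (X : Matrix l m 𝕜) (Y : Matrix m n 𝕜) :
    ((X * Y)ᴴ * (X * Y)).trace = (Xᴴ * X * (Y * Yᴴ)).trace := by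
  rw [conjTranspose_mul, Matrix.mul_assoc, trace_mul_comm]
  simp only [Matrix.mul_assoc]

section FunctionalCalculus

variable [DecidableEq n] {A : Matrix n n 𝕜}

lemma cfc_mul_cfc (f g : ℝ → ℝ) (A : Matrix n n 𝕜) :
    cfc f A * cfc g A = cfc (fun x => f x * g x) A :=
  (cfc_mul f g A (finite_real_spectrum.continuousOn _) (finite_real_spectrum.continuousOn _)).symm

lemma IsHermitian.cfc_mul_self (hA : A.IsHermitian) (f : ℝ → ℝ) :
    cfc f A * A = cfc (fun x => f x * x) A := by
  conv_lhs => arg 2; rw [← cfc_id' ℝ A]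
  exact cfc_mul_cfc _ _ A

lemma IsHermitian.self_mul_cfc (hA : A.IsHermitian) (f : ℝ → ℝ) :
    A * cfc f A = cfc (fun x => x * f x) A := by
  conv_lhs => arg 1; rw [← cfc_id' ℝ A]
  exact cfc_mul_cfc _ _ A

lemma conjTranspose_cfc (f : ℝ → ℝ) (A : Matrix n n 𝕜) : (cfc f A)ᴴ = cfc f A :=
  (cfc_predicate f A : IsSelfAdjoint _)

lemma IsHermitian.mul_cfc_inv_mul_self (hA : A.IsHermitian) : A * cfc (·⁻¹ : ℝ → ℝ) A * A = A := by
  rw [hA.self_mul_cfc, hA.cfc_mul_self]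
  conv_rhs => rw [← cfc_id' ℝ A]
  simp only [mul_inv_mul_cancel]

lemma PosSemidef.cfc_congr (hA : A.PosSemidef) {f g : ℝ → ℝ} (hfg : ∀ x, 0 ≤ x → f x = g x) :
    cfc f A = cfc g A :=
  _root_.cfc_congr fun _ hx => hfg _ (spectrum_nonneg_of_nonneg hA.nonneg hx)

lemma PosSemidef.sqrt_eq_cfc (hA : A.PosSemidef) : hA.sqrt = cfc Real.sqrt A := by
  rw [hA.isHermitian.cfc_eq]; rfl

lemma PosSemidef.sqrt_mul_sqrt (hA : A.PosSemidef) : hA.sqrt * hA.sqrt = A := by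
  rw [hA.sqrt_eq_cfc, cfc_mul_cfc]
  conv_rhs => rw [← cfc_id' ℝ A]
  exact hA.cfc_congr fun x hx => Real.mul_self_sqrt hx

lemma PosSemidef.posSemidef_sqrt (hA : A.PosSemidef) : hA.sqrt.PosSemidef := by
  rw [hA.sqrt_eq_cfc, ← nonneg_iff_posSemidef]
  exact cfc_nonneg fun x _ => Real.sqrt_nonneg x

lemma PosSemidef.sqrt_eq_mul_cfc (hA : A.PosSemidef) : hA.sqrt = A * cfc (fun x => (√x)⁻¹) A := by
  rw [hA.isHermitian.self_mul_cfc, hA.sqrt_eq_cfc]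
  simp only [← div_eq_mul_inv, Real.div_sqrt]

lemma PosSemidef.mul_sqrt_eq_of_mul_eq {P : Matrix n n 𝕜} (hA : A.PosSemidef) (h : P * A = A) :
    P * hA.sqrt = hA.sqrt := by
  rw [hA.sqrt_eq_mul_cfc, ← mul_assoc, h]

lemma PosSemidef.trace_mul_nonneg {P Q : Matrix n n 𝕜} (hP : P.PosSemidef) (hQ : Q.PosSemidef) :
    0 ≤ (P * Q).trace := by
  have h := (hQ.mul_mul_conjTranspose_same hP.sqrt).trace_nonneg
  rwa [hP.posSemidef_sqrt.isHermitian.eq, trace_mul_cycle, hP.sqrt_mul_sqrt] at h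

lemma PosSemidef.trace_mul_le_trace_mul {P Q R : Matrix n n 𝕜} (hP : P.PosSemidef) (hQR : Q ≤ R) :
    (P * Q).trace ≤ (P * R).trace := by
  rw [← sub_nonneg, ← trace_sub, ← mul_sub]
  exact hP.trace_mul_nonneg hQR

lemma exists_isStarProjection_conjTranspose_mul_eq_sqrt [DecidableEq m] (M : Matrix m n 𝕜) :
    ∃ V : Matrix m n 𝕜, Vᴴ * M = (posSemidef_conjTranspose_mul_self M).sqrt ∧
      IsStarProjection (V * Vᴴ) := by
  set H := Mᴴ * M
  have hH : H.PosSemidef := posSemidef_conjTranspose_mul_self M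
  set G := cfc (fun x => (√x)⁻¹) H
  have hGH : G * H = hH.sqrt := by
    rw [hH.isHermitian.cfc_mul_self, hH.sqrt_eq_cfc]
    simp only [mul_comm _ (_ : ℝ), ← div_eq_mul_inv, Real.div_sqrt]
  have hGsqrtG : G * hH.sqrt * G = G := by
    rw [hH.sqrt_eq_cfc, cfc_mul_cfc, cfc_mul_cfc]
    congr 1 with x
    simpa using mul_inv_mul_cancel (√x)⁻¹
  have hMG : (M * G)ᴴ = G * Mᴴ := by rw [conjTranspose_mul, conjTranspose_cfc]
  have hpartial : M * G * (M * G)ᴴ * (M * G) = M * G :=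
    calc M * G * (M * G)ᴴ * (M * G) = M * (G * (G * H) * G) := by
          simp only [hMG, H, Matrix.mul_assoc]
      _ = M * G := by rw [hGH, hGsqrtG]
  refine ⟨M * G, by rw [hMG, Matrix.mul_assoc, hGH], ?_, isHermitian_mul_conjTranspose_self _⟩
  rw [IsIdempotentElem, ← Matrix.mul_assoc, hpartial]

end FunctionalCalculus

end Matrix

section TraceNorm

variable {l m n : Type*} [Fintype l] [Fintype m] [Fintype n] [DecidableEq n]

lemma traceNorm_mul_le [DecidableEq l] (X : Matrix l m ℂ) (Y : Matrix m n ℂ) :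
    traceNorm (X * Y) ≤ √(Xᴴ * X).trace.re * √(Yᴴ * Y).trace.re := by
  obtain ⟨V, hVXY, hV⟩ := exists_isStarProjection_conjTranspose_mul_eq_sqrt (X * Y)
  have htraceNorm : traceNorm (X * Y) = ((Xᴴ * V)ᴴ * Y).trace.re := by
    rw [traceNorm, ← hVXY, conjTranspose_mul, conjTranspose_conjTranspose, Matrix.mul_assoc]
  have hXV : ((Xᴴ * V)ᴴ * (Xᴴ * V)).trace.re ≤ (Xᴴ * X).trace.re := by
    have h := (posSemidef_self_mul_conjTranspose X).trace_mul_le_trace_mul hV.le_one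
    rw [mul_one, trace_mul_comm X] at h
    rw [trace_conjTranspose_mul_mul_self, conjTranspose_conjTranspose]
    exact (Complex.le_def.mp h).1
  calc traceNorm (X * Y) ≤ √((Xᴴ * V)ᴴ * (Xᴴ * V)).trace.re * √(Yᴴ * Y).trace.re :=
        by simpa only [htraceNorm, RCLike.re_to_complex] using
          re_trace_conjTranspose_mul_le (Xᴴ * V) Y
    _ ≤ √(Xᴴ * X).trace.re * √(Yᴴ * Y).trace.re := by gcongr

lemma traceNorm_sqrt_mul_sqrt_le {ρ τ A : Matrix n n ℂ} (hρ : ρ.PosSemidef) (hτ : τ.PosSemidef)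
    (hA : A.PosSemidef) (hsupp : A * cfc (·⁻¹ : ℝ → ℝ) A * τ = τ) :
    traceNorm (hρ.sqrt * hτ.sqrt) ≤
      √(ρ * A).trace.re * √(cfc (·⁻¹ : ℝ → ℝ) A * τ).trace.re := by
  set G := cfc (fun x => (√x)⁻¹) A
  have hsqrtG : hA.sqrt * G = A * cfc (·⁻¹ : ℝ → ℝ) A := by
    rw [hA.sqrt_eq_cfc, cfc_mul_cfc, hA.isHermitian.self_mul_cfc]
    refine hA.cfc_congr fun x hx => ?_
    rcases hx.eq_or_lt with rfl | hx
    · simp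
    · rw [mul_inv_cancel₀ hx.ne', mul_inv_cancel₀ (Real.sqrt_pos.2 hx).ne']
  have hGG : G * G = cfc (·⁻¹ : ℝ → ℝ) A := by
    rw [cfc_mul_cfc]
    exact hA.cfc_congr fun x hx => by rw [← mul_inv, Real.mul_self_sqrt hx]
  have hfactor : hρ.sqrt * hτ.sqrt = (hρ.sqrt * hA.sqrt) * (G * hτ.sqrt) := by
    rw [Matrix.mul_assoc, ← Matrix.mul_assoc hA.sqrt, hsqrtG, hτ.mul_sqrt_eq_of_mul_eq hsupp]
  have hρA : ((hρ.sqrt * hA.sqrt)ᴴ * (hρ.sqrt * hA.sqrt)).trace = (ρ * A).trace := by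
    rw [trace_conjTranspose_mul_mul_self, hρ.posSemidef_sqrt.isHermitian.eq,
      hA.posSemidef_sqrt.isHermitian.eq, hρ.sqrt_mul_sqrt, hA.sqrt_mul_sqrt]
  have hGτ : ((G * hτ.sqrt)ᴴ * (G * hτ.sqrt)).trace = (cfc (·⁻¹ : ℝ → ℝ) A * τ).trace := by
    rw [trace_conjTranspose_mul_mul_self, hτ.posSemidef_sqrt.isHermitian.eq, conjTranspose_cfc,
      hGG, hτ.sqrt_mul_sqrt]
  rw [hfactor, ← hρA, ← hGτ]
  exact traceNorm_mul_le _ _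

end TraceNorm

theorem rootFidelity_cond_le_general {d : ℕ} (ρ σ A : Matrix (Fin d) (Fin d) ℂ)
    (hρ : ρ.PosSemidef)
    (hσ : σ.PosSemidef)
    (hA : A.PosSemidef)
    (hcond : (((σ * (A * A)).trace)⁻¹ • (A * σ * A)).PosSemidef) :
    traceNorm (hρ.sqrt * hcond.sqrt) ≤
        Real.sqrt (((ρ * A).trace).re) * Real.sqrt (((σ * A).trace).re) /
          Real.sqrt (((σ * (A * A)).trace).re) ∧
      (A * A = A → traceNorm (hρ.sqrt * hcond.sqrt) ≤ Real.sqrt (((ρ * A).trace).re)) := by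
  set c := (σ * (A * A)).trace
  have hc : 0 ≤ c := hσ.trace_mul_nonneg (pow_two A ▸ hA.pow 2)
  have hsupp : A * cfc (·⁻¹ : ℝ → ℝ) A * (c⁻¹ • (A * σ * A)) = c⁻¹ • (A * σ * A) := by
    rw [Matrix.mul_smul, ← Matrix.mul_assoc, ← Matrix.mul_assoc,
      hA.isHermitian.mul_cfc_inv_mul_self]
  have htrace : (cfc (·⁻¹ : ℝ → ℝ) A * (A * σ * A)).trace = (σ * A).trace := by
    rw [← Matrix.mul_assoc, trace_mul_comm, ← Matrix.mul_assoc, ← Matrix.mul_assoc,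
      hA.isHermitian.mul_cfc_inv_mul_self, trace_mul_comm]
  have hbound := traceNorm_sqrt_mul_sqrt_le hρ hcond hA hsupp
  have hcre : c = (c.re : ℂ) := Complex.eq_re_of_ofReal_le (by rw [Complex.ofReal_zero]; exact hc)
  have hre : (c⁻¹ • (σ * A).trace).re = (σ * A).trace.re / c.re := by
    conv_lhs => rw [hcre]
    rw [smul_eq_mul, ← Complex.ofReal_inv, Complex.re_ofReal_mul, div_eq_inv_mul]
  rw [Matrix.mul_smul, trace_smul, htrace, hre, Real.sqrt_div' _ (Complex.nonneg_iff.mp hc).1,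
    ← mul_div_assoc] at hbound
  refine ⟨hbound, fun hproj => hbound.trans ?_⟩
  have hcproj : c = (σ * A).trace := by simp only [c, hproj]
  rw [mul_div_assoc, hcproj]
  exact mul_le_of_le_one_right (Real.sqrt_nonneg _) (div_self_le_one _)

/-- √F(ρ, σ|A) ≤ √tr(ρA)·√tr(σA)/√tr(σA²); for a projector, √F(ρ, σ|A) ≤ √tr(ρA). -/
theorem rootFidelity_cond_le {d : ℕ} (ρ σ A : Matrix (Fin d) (Fin d) ℂ)
    (hρ : ρ.PosSemidef) (hρ1 : ρ.trace = 1)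
    (hσ : σ.PosSemidef) (hσ1 : σ.trace = 1)
    (hA : A.PosSemidef) (hA1 : (1 - A).PosSemidef)
    (hpos : 0 < ((σ * (A * A)).trace).re)
    (hcond : (((σ * (A * A)).trace)⁻¹ • (A * σ * A)).PosSemidef) :
    traceNorm (hρ.sqrt * hcond.sqrt) ≤
        Real.sqrt (((ρ * A).trace).re) * Real.sqrt (((σ * A).trace).re) /
          Real.sqrt (((σ * (A * A)).trace).re) ∧
      (A * A = A → traceNorm (hρ.sqrt * hcond.sqrt) ≤ Real.sqrt (((ρ * A).trace).re)) :=
  rootFidelity_cond_le_general ρ σ A hρ hσ hA hcond
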